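/- Let f, g ∈ ℤ[t] be monic polynomials of positive degree. Then |Res(f,g)| = 1 if and only if the ideal generated by f and g in ℤ[t] is the whole ring ℤ[t]. -/

import Mathlib

/-- The Sylvester-type matrix `A(f,g)` of two integer polynomials: its first
`deg g` columns contain the coefficients of `f, tf, ..., t^{deg g - 1} f` and its last
`deg f` columns contain the coefficients of `g, tg, ..., t^{deg f - 1} g`,
all expressed in the basis `1, t, ..., t^{deg f + deg g - 1}`. -/
noncomputable def sylvesterMatrix (f g : Polynomial ℤ) :
    Matrix (Fin (f.natDegree + g.natDegree)) (Fin (f.natDegree + g.natDegree)) ℤ :=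
  Matrix.of fun i j =>
    if (j : ℕ) < g.natDegree then (Polynomial.X ^ (j : ℕ) * f).coeff (i : ℕ)
    else (Polynomial.X ^ ((j : ℕ) - g.natDegree) * g).coeff (i : ℕ)

/-- The resultant `Res(f,g)` of two integer polynomials, as the determinant of the
Sylvester matrix. -/
noncomputable def res (f g : Polynomial ℤ) : ℤ := (sylvesterMatrix f g).det

/-! The matrix `sylvesterMatrix f g` is Mathlib's `sylvester g f` with rows and columns reindexed
along `deg g + deg f = deg f + deg g`, so `res f g` is Mathlib's `resultant g f`. For monic `g`
this resultant is a unit exactly when `g` and `f` are coprime, i.e. when `(f, g) = ℤ[t]`. -/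

open Polynomial

theorem coeff_X_pow_mul_eq_ite_mem_Icc {R : Type*} [Semiring R] (p : R[X]) (i j : ℕ) :
    (X ^ j * p).coeff i = if i ∈ Set.Icc j (j + p.natDegree) then p.coeff (i - j) else 0 := by
  simp only [coeff_X_pow_mul', Set.mem_Icc, ite_and]
  split_ifs <;> first | rfl | exact coeff_eq_zero_of_natDegree_lt (by lia)

theorem sylvesterMatrix_eq_reindex_sylvester (f g : ℤ[X]) :
    sylvesterMatrix f g = (sylvester g f g.natDegree f.natDegree).reindex
      (finCongr (add_comm _ _)) (finCongr (add_comm _ _)) := by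
  ext i j
  obtain ⟨j, rfl⟩ := (finCongr (add_comm g.natDegree f.natDegree)).surjective j
  rw [Matrix.reindex_apply, Matrix.submatrix_apply, Equiv.symm_apply_apply]
  induction j using Fin.addCases <;>
    simp [sylvesterMatrix, sylvester, coeff_X_pow_mul_eq_ite_mem_Icc, -Fin.val_fin_le]

theorem res_eq_resultant (f g : ℤ[X]) : res f g = resultant g f := by
  rw [res, sylvesterMatrix_eq_reindex_sylvester, Matrix.det_reindex_self, resultant]

theorem resultant_natAbs_eq_one_iff_general (f g : Polynomial ℤ) (hg : g.Monic) :
    (res f g).natAbs = 1 ↔ Ideal.span {f, g} = (⊤ : Ideal (Polynomial ℤ)) := by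
  rw [← Int.isUnit_iff_natAbs_eq, res_eq_resultant, isUnit_resultant_iff_isCoprime hg,
    Ideal.span_insert, Ideal.sup_eq_top_iff_isCoprime, isCoprime_comm]

/-- Lemma 4.3 (c): for monic integer polynomials `f, g` of positive degree,
`|Res(f,g)| = 1` if and only if the ideal `(f,g)` is all of `ℤ[t]`. -/
theorem resultant_natAbs_eq_one_iff (f g : Polynomial ℤ) (hf : f.Monic) (hg : g.Monic)
    (hdf : 0 < f.natDegree) (hdg : 0 < g.natDegree) :
    (res f g).natAbs = 1 ↔ Ideal.span {f, g} = (⊤ : Ideal (Polynomial ℤ)) :=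
  resultant_natAbs_eq_one_iff_general f g hg
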